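/- arXiv:2505.17699 — 4 statements merged into one kernel-verified Lean document; each statement's English description precedes it below -/
import Mathlib

section
/- Let N ⊆ ℤ × ℤ satisfy: for all (a,b) ∈ ℤ × ℤ, (a,b) ∈ N if and only if ((a−1,b) ∈ N and (a,b−1) ∈ N). Suppose there exists (a₀,b₀) ∈ N with (a₀+1,b₀) ∉ N and (a₀,b₀+1) ∉ N. Then N = { (a,b) ∈ ℤ × ℤ : a ≤ a₀ and b ≤ b₀ }, i.e., N is a southwest quarter-plane with corner (a₀,b₀). -/
/-- If `N ⊆ ℤ × ℤ` satisfies `(a,b) ∈ N ↔ ((a−1,b) ∈ N ∧ (a,b−1) ∈ N)` and has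
a point `(a₀,b₀) ∈ N` whose east and north neighbours are not in `N`, then `N`
is exactly the southwest quarter-plane with corner `(a₀,b₀)`. -/
theorem quarterPlane_of_corner (N : Set (ℤ × ℤ))
    (h : ∀ a b : ℤ, (a, b) ∈ N ↔ ((a - 1, b) ∈ N ∧ (a, b - 1) ∈ N))
    (a₀ b₀ : ℤ) (h₀ : (a₀, b₀) ∈ N)
    (hE : (a₀ + 1, b₀) ∉ N) (hN : (a₀, b₀ + 1) ∉ N) :
    N = {p : ℤ × ℤ | p.1 ≤ a₀ ∧ p.2 ≤ b₀} := by
  have hW : ∀ a b : ℤ, (a, b) ∈ N → (a - 1, b) ∈ N := fun a b hab => ((h a b).1 hab).1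
  have hS : ∀ a b : ℤ, (a, b) ∈ N → (a, b - 1) ∈ N := fun a b hab => ((h a b).1 hab).2
  have downW : ∀ (n : ℕ) (a b : ℤ), (a, b) ∈ N → (a - n, b) ∈ N := by
    intro n
    induction n with
    | zero => intro a b hab; simpa using hab
    | succ k ih =>
      intro a b hab
      have := hW _ _ (ih a b hab)
      have he : (a - k - 1 : ℤ) = a - (k + 1 : ℕ) := by push_cast; ring
      rwa [he] at this
  have downS : ∀ (n : ℕ) (a b : ℤ), (a, b) ∈ N → (a, b - n) ∈ N := by
    intro n
    induction n with
    | zero => intro a b hab; simpa using hab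
    | succ k ih =>
      intro a b hab
      have := hS _ _ (ih a b hab)
      have he : (b - k - 1 : ℤ) = b - (k + 1 : ℕ) := by push_cast; ring
      rwa [he] at this
  have mono : ∀ a b a' b' : ℤ, (a, b) ∈ N → a' ≤ a → b' ≤ b → (a', b') ∈ N := by
    intro a b a' b' hab ha hb
    have h1 := downW (a - a').toNat a b hab
    rw [show (a - ((a - a').toNat : ℤ)) = a' by rw [Int.toNat_of_nonneg (by omega)]; ring] at h1
    have h2 := downS (b - b').toNat a' b h1
    rwa [show (b - ((b - b').toNat : ℤ)) = b' by rw [Int.toNat_of_nonneg (by omega)]; ring] at h2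
  have fillE : ∀ (n : ℕ) (b : ℤ), b + n = b₀ → (a₀ + 1, b) ∈ N → False := by
    intro n
    induction n with
    | zero => intro b hb hbN; apply hE; rwa [show b = b₀ by push_cast at hb; omega] at hbN
    | succ k ih =>
      intro b hb hbN
      apply ih (b + 1) (by push_cast at hb ⊢; omega)
      apply (h (a₀ + 1) (b + 1)).2
      constructor
      · have : (a₀, b + 1) ∈ N := mono a₀ b₀ a₀ (b + 1) h₀ le_rfl (by push_cast at hb; omega)
        simpa using this
      · simpa using hbN
  have fillN : ∀ (n : ℕ) (a : ℤ), a + n = a₀ → (a, b₀ + 1) ∈ N → False := by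
    intro n
    induction n with
    | zero => intro a ha haN; apply hN; rwa [show a = a₀ by push_cast at ha; omega] at haN
    | succ k ih =>
      intro a ha haN
      apply ih (a + 1) (by push_cast at ha ⊢; omega)
      apply (h (a + 1) (b₀ + 1)).2
      constructor
      · simpa using haN
      · have : (a + 1, b₀) ∈ N := mono a₀ b₀ (a + 1) b₀ h₀ (by push_cast at ha; omega) le_rfl
        simpa using this
  ext ⟨a, b⟩
  simp only [Set.mem_setOf_eq]
  constructor
  · intro hab
    constructor
    · by_contra ha
      push_neg at ha
      by_cases hb : b ≤ b₀
      · exact fillE (b₀ - b).toNat b (by rw [Int.toNat_of_nonneg (by omega)]; ring)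
          (mono a b (a₀ + 1) b hab (by omega) le_rfl)
      · exact hE (mono a b (a₀ + 1) b₀ hab (by omega) (by omega))
    · by_contra hb
      push_neg at hb
      by_cases ha : a ≤ a₀
      · exact fillN (a₀ - a).toNat a (by rw [Int.toNat_of_nonneg (by omega)]; ring)
          (mono a b a (b₀ + 1) hab le_rfl (by omega))
      · exact hN (mono a b a₀ (b₀ + 1) hab (by omega) (by omega))
  · intro ⟨ha, hb⟩
    exact mono a₀ b₀ a b h₀ ha hb
end

section
/- A set E ⊆ ℤ × ℤ is finite if and only if there exist sets N, S ⊆ ℤ × ℤ such that: (1) for all (a,b), (a,b) ∈ N iff ((a−1,b) ∈ N and (a,b−1) ∈ N); (2) for all (a,b), (a,b) ∈ S iff ((a+1,b) ∈ S and (a,b+1) ∈ S); (3) there exists (a,b) ∈ N with (a,b+1) ∉ N and (a+1,b) ∉ N; (4) there exists (a,b) ∈ S with (a,b−1) ∉ S and (a−1,b) ∉ S; and (5) E ⊆ N ∩ S. -/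
/-!
Condition (1) makes `N` a lower set for the product order, and it lets membership climb a
column: if `(a, b) ∈ N` and `(a - 1, c) ∈ N` with `b ≤ c`, then `(a, c) ∈ N`. So a point of `N`
east of the corner `(a₀, b₀)` would drag `(a₀ + 1, b₀)` into `N`; with the symmetric argument,
`N` is contained in the quarter-plane below `(a₀, b₀)`. Reflecting through the origin, `S` lies
above its corner, so `E ⊆ N ∩ S` lies in a finite box. Conversely a finite set lies in a box,
whose two bounding quarter-planes work.
-/

open Set
open scoped Pointwise

def IsSouthwestQuarterPlane (N : Set (ℤ × ℤ)) : Prop :=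
  ∀ a b : ℤ, (a, b) ∈ N ↔ ((a - 1, b) ∈ N ∧ (a, b - 1) ∈ N)

namespace IsSouthwestQuarterPlane

variable {N : Set (ℤ × ℤ)}

theorem isLowerSet (hN : IsSouthwestQuarterPlane N) : IsLowerSet N := by
  rintro ⟨a, b⟩ ⟨a', b'⟩ hle h
  obtain ⟨ha, hb⟩ : a' ≤ a ∧ b' ≤ b := hle
  have hrow : (a', b) ∈ N := by
    induction a', ha using Int.leInductionDown with
    | base => exact h
    | pred x _ hx => exact ((hN x b).1 hx).1
  induction b', hb using Int.leInductionDown with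
  | base => exact hrow
  | pred y _ hy => exact ((hN a' y).1 hy).2

theorem swap (hN : IsSouthwestQuarterPlane N) : IsSouthwestQuarterPlane (Prod.swap ⁻¹' N) := by
  intro a b
  simp only [mem_preimage, Prod.swap_prod_mk]
  rw [hN b a, and_comm]

theorem mem_of_mem_west (hN : IsSouthwestQuarterPlane N) {a b c : ℤ} (hab : (a, b) ∈ N)
    (hwest : (a - 1, c) ∈ N) (hbc : b ≤ c) : (a, c) ∈ N := by
  induction c, hbc using Int.leInduction with
  | base => exact hab
  | succ c hbc ih =>
    have hc : (a, c) ∈ N := ih (hN.isLowerSet (by simp [Prod.le_def]) hwest)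
    exact (hN a (c + 1)).2 ⟨hwest, by simpa using hc⟩

theorem fst_le_of_corner (hN : IsSouthwestQuarterPlane N) {a₀ b₀ : ℤ} (h₀ : (a₀, b₀) ∈ N)
    (heast : (a₀ + 1, b₀) ∉ N) {p : ℤ × ℤ} (hp : p ∈ N) : p.1 ≤ a₀ := by
  by_contra! h
  have hcol : (a₀ + 1, min p.2 b₀) ∈ N :=
    hN.isLowerSet (show (a₀ + 1, min p.2 b₀) ≤ p from ⟨h, min_le_left _ _⟩) hp
  exact heast (hN.mem_of_mem_west hcol (by simpa using h₀) (min_le_right _ _))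

theorem subset_Iic_of_corner (hN : IsSouthwestQuarterPlane N) {a₀ b₀ : ℤ} (h₀ : (a₀, b₀) ∈ N)
    (hnorth : (a₀, b₀ + 1) ∉ N) (heast : (a₀ + 1, b₀) ∉ N) : N ⊆ Iic (a₀, b₀) := fun p hp =>
  ⟨hN.fst_le_of_corner h₀ heast hp,
    hN.swap.fst_le_of_corner (p := p.swap) (by simpa using h₀) (by simpa using hnorth)
      (by simpa using hp)⟩

end IsSouthwestQuarterPlane

theorem isSouthwestQuarterPlane_neg {S : Set (ℤ × ℤ)}
    (hS : ∀ a b : ℤ, (a, b) ∈ S ↔ ((a + 1, b) ∈ S ∧ (a, b + 1) ∈ S)) :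
    IsSouthwestQuarterPlane (-S) := by
  intro a b
  simp only [mem_neg, Prod.neg_mk, neg_sub', sub_neg_eq_add]
  exact hS (-a) (-b)

theorem subset_Ici_of_corner {S : Set (ℤ × ℤ)}
    (hS : ∀ a b : ℤ, (a, b) ∈ S ↔ ((a + 1, b) ∈ S ∧ (a, b + 1) ∈ S)) {c₀ d₀ : ℤ}
    (h₀ : (c₀, d₀) ∈ S) (hsouth : (c₀, d₀ - 1) ∉ S) (hwest : (c₀ - 1, d₀) ∉ S) :
    S ⊆ Ici (c₀, d₀) := by
  have hneg := (isSouthwestQuarterPlane_neg hS).subset_Iic_of_corner (a₀ := -c₀) (b₀ := -d₀)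
    (by simpa using h₀) (by simpa [sub_eq_neg_add] using hsouth)
    (by simpa [sub_eq_neg_add] using hwest)
  intro p hp
  have hle : -p ≤ -(c₀, d₀) := hneg (neg_mem_neg.2 hp)
  exact neg_le_neg_iff.1 hle

/-- A set `E ⊆ ℤ × ℤ` is finite if and only if it is contained in the
intersection of a nondegenerate southwest quarter-plane `N` and a nondegenerate
northeast quarter-plane `S`. -/
theorem finite_iff_between_quarterPlanes (E : Set (ℤ × ℤ)) :
    E.Finite ↔ ∃ N S : Set (ℤ × ℤ),
      (∀ a b : ℤ, (a, b) ∈ N ↔ ((a - 1, b) ∈ N ∧ (a, b - 1) ∈ N)) ∧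
      (∀ a b : ℤ, (a, b) ∈ S ↔ ((a + 1, b) ∈ S ∧ (a, b + 1) ∈ S)) ∧
      (∃ a b : ℤ, (a, b) ∈ N ∧ (a, b + 1) ∉ N ∧ (a + 1, b) ∉ N) ∧
      (∃ a b : ℤ, (a, b) ∈ S ∧ (a, b - 1) ∉ S ∧ (a - 1, b) ∉ S) ∧
      E ⊆ N ∩ S := by
  constructor
  · intro hE
    obtain ⟨⟨a, b⟩, hab⟩ := hE.bddAbove
    obtain ⟨⟨c, d⟩, hcd⟩ := hE.bddBelow
    refine ⟨Iic (a, b), Ici (c, d), ?_, ?_, ⟨a, b, ?_⟩, ⟨c, d, ?_⟩, fun p hp => ⟨hab hp, hcd hp⟩⟩ <;>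
      simp only [mem_Iic, mem_Ici, Prod.mk_le_mk] <;> omega
  · rintro ⟨N, S, hN, hS, ⟨a, b, hab, hnorth, heast⟩, ⟨c, d, hcd, hsouth, hwest⟩, hE⟩
    have hNle := IsSouthwestQuarterPlane.subset_Iic_of_corner hN hab hnorth heast
    have hSge := subset_Ici_of_corner hS hcd hsouth hwest
    exact (finite_Icc (c, d) (a, b)).subset fun p hp => ⟨hSge (hE hp).2, hNle (hE hp).1⟩
end

section
/- For every L_A-sentence φ there exist integers n, k ≥ 1 such that X_φ is a union of ∼_(n,k)-equivalence classes; that is, for all configurations x, y : ℤ × ℤ → A with x ∼_(n,k) y, one has M_x ⊨ φ if and only if M_y ⊨ φ. -/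
/-!
Hanf locality, proved with an Ehrenfeucht–Fraïssé game. Each formula gets a radius, tripled at
every quantifier. Two tuples are matched at radius `r` when corresponding points carry the same
`r`-ball and points that are `2r`-close on either side are placed identically. A new point close
to a chosen one is answered by the same translate of its partner. A new point `c` far from all
chosen points is answered by a point with the same `r'`-ball as `c`, far from all partners: for
`n = 2R + 1`, the relation `∼_(n,k)` compares, up to `k`, the numbers of occurrences of every ball
of radius at most `R`, while fewer than `k` points lie near the partners, and these correspond
injectively to points near the chosen ones. Induction on formulas then shows that matched tuples
satisfy the same formulas.
-/

open FirstOrder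

/-- The four unary function symbols East, West, North, South. -/
inductive Dir : Type
  | east | west | north | south

/-- The first-order language `L_A`: four unary function symbols and a unary
relation symbol `P_c` for each colour `c ∈ A`. -/
def LA (A : Type) : FirstOrder.Language where
  Functions := fun n => match n with
    | 1 => Dir
    | _ => Empty
  Relations := fun n => match n with
    | 1 => A
    | _ => Empty

/-- The `L_A`-structure `M_x` on `ℤ × ℤ` associated to a configuration `x`. -/
def struc (A : Type) (x : ℤ × ℤ → A) : (LA A).Structure (ℤ × ℤ) where
  funMap {n} f v :=
    match n, f, v with
    | 1, Dir.east, v => ((v 0).1 + 1, (v 0).2)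
    | 1, Dir.west, v => ((v 0).1 - 1, (v 0).2)
    | 1, Dir.north, v => ((v 0).1, (v 0).2 + 1)
    | 1, Dir.south, v => ((v 0).1, (v 0).2 - 1)
  RelMap {n} r v :=
    match n, r, v with
    | 1, c, v => x (v 0) = c

/-- `M_x ⊨ φ`. -/
def Models {A : Type} (x : ℤ × ℤ → A) (φ : (LA A).Sentence) : Prop :=
  @FirstOrder.Language.Sentence.Realize (LA A) (ℤ × ℤ) (struc A x) φ

/-- The square `[0, n−1]²` in `ℤ × ℤ`. -/
def sqN (n : ℕ) : Set (ℤ × ℤ) :=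
  {p | 0 ≤ p.1 ∧ p.1 < (n : ℤ) ∧ 0 ≤ p.2 ∧ p.2 < (n : ℤ)}

/-- The set of positions at which the `n × n` pattern `P` (i.e. the restriction
of `P` to `[0, n−1]²`) occurs in the configuration `x`. -/
def OccSet {A : Type} (x P : ℤ × ℤ → A) (n : ℕ) : Set (ℤ × ℤ) :=
  {v | ∀ u ∈ sqN n, P u = x (u + v)}

/-- The `n × n` pattern `P` occurs at exactly `t` positions in `x`. -/
def ExactOcc {A : Type} (x P : ℤ × ℤ → A) (n t : ℕ) : Prop :=
  (OccSet x P n).Finite ∧ (OccSet x P n).ncard = t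

/-- `x ∼_(n,k) y`: every `n × n` pattern occurs exactly `t` times in `x` iff it
occurs exactly `t` times in `y`, for every `t < k`. -/
def EquivNK {A : Type} (n k : ℕ) (x y : ℤ × ℤ → A) : Prop :=
  ∀ P : ℤ × ℤ → A, ∀ t < k, (ExactOcc x P n t ↔ ExactOcc y P n t)

namespace ENat

theorem min_coe_eq_min_coe_of_forall_lt {a b : ℕ∞} {k : ℕ} (h : ∀ t < k, a = t ↔ b = t) :
    min a k = min b k := by
  rcases lt_or_ge a k with ha | ha
  · lift a to ℕ using ha.ne_top
    rw [(h a (mod_cast ha)).mp rfl]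
  rcases lt_or_ge b k with hb | hb
  · lift b to ℕ using hb.ne_top
    rw [(h b (mod_cast hb)).mpr rfl]
  rw [min_eq_right ha, min_eq_right hb]

theorem min_add_eq_min_min_add_min (a b c : ℕ∞) :
    min (a + b) c = min (min a c + min b c) c := by
  rcases le_total a c with ha | ha
  · rcases le_total b c with hb | hb
    · rw [min_eq_left ha, min_eq_left hb]
    · rw [min_eq_right hb, min_eq_right (hb.trans le_add_self),
        min_eq_right (le_add_self : c ≤ min a c + c)]
  · rw [min_eq_right ha, min_eq_right (ha.trans le_self_add),
      min_eq_right (le_self_add : c ≤ c + min b c)]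

end ENat

section CardEqUpTo

variable {α β ι : Type*} {k : ℕ}

def CardEqUpTo (k : ℕ) (s : Set α) (t : Set β) : Prop :=
  min s.encard k = min t.encard k

theorem CardEqUpTo.union {s s' : Set α} {t t' : Set β} (h : CardEqUpTo k s t)
    (h' : CardEqUpTo k s' t') (hs : Disjoint s s') (ht : Disjoint t t') :
    CardEqUpTo k (s ∪ s') (t ∪ t') := by
  unfold CardEqUpTo at *
  rw [Set.encard_union_eq hs, Set.encard_union_eq ht, ENat.min_add_eq_min_min_add_min, h, h',
    ← ENat.min_add_eq_min_min_add_min]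

theorem CardEqUpTo.preimage_equiv {s : Set α} {t : Set β} (h : CardEqUpTo k s t) (e : ι ≃ α)
    (e' : ι ≃ β) : CardEqUpTo k (e ⁻¹' s) (e' ⁻¹' t) := by
  unfold CardEqUpTo at *
  rwa [Set.encard_preimage_of_injective_subset_range e.injective (by simp),
    Set.encard_preimage_of_injective_subset_range e'.injective (by simp)]

theorem cardEqUpTo_preimage [Finite ι] {f : α → ι} {g : β → ι}
    (hfib : ∀ i, CardEqUpTo k (f ⁻¹' {i}) (g ⁻¹' {i})) (W : Set ι) :
    CardEqUpTo k (f ⁻¹' W) (g ⁻¹' W) := by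
  induction W, W.toFinite using Set.Finite.induction_on with
  | empty => simp [CardEqUpTo]
  | @insert i W hi _ ih =>
    rw [Set.insert_eq, Set.preimage_union, Set.preimage_union]
    have hdisj : Disjoint {i} W := Set.disjoint_singleton_left.mpr hi
    exact (hfib i).union ih (hdisj.preimage f) (hdisj.preimage g)

theorem exactOcc_iff_encard {A : Type} {x P : ℤ × ℤ → A} {n t : ℕ} :
    ExactOcc x P n t ↔ (OccSet x P n).encard = t :=
  ⟨fun ⟨hfin, hcard⟩ => hcard ▸ hfin.cast_ncard_eq.symm,
    fun h => ⟨Set.finite_of_encard_eq_coe h, by rw [Set.ncard_def, h]; rfl⟩⟩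

theorem EquivNK.symm {A : Type} {n k : ℕ} {x y : ℤ × ℤ → A} (h : EquivNK n k x y) :
    EquivNK n k y x :=
  fun P t ht => (h P t ht).symm

theorem EquivNK.cardEqUpTo_occSet {A : Type} {n : ℕ} {x y : ℤ × ℤ → A} (h : EquivNK n k x y)
    (P : ℤ × ℤ → A) : CardEqUpTo k (OccSet x P n) (OccSet y P n) :=
  ENat.min_coe_eq_min_coe_of_forall_lt fun t ht => by
    rw [← exactOcc_iff_encard, ← exactOcc_iff_encard]; exact h P t ht

theorem CardEqUpTo.nonempty_diff {s N : Set α} {t M : Set β}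
    (h : CardEqUpTo k s t) (hM : M.encard < k) (hle : (t ∩ M).encard ≤ (s ∩ N).encard)
    (hs : (s \ N).Nonempty) : (t \ M).Nonempty := by
  by_contra ht
  rw [Set.not_nonempty_iff_eq_empty, Set.sdiff_eq_empty] at ht
  obtain ⟨c, hcs, hcN⟩ := hs
  have htk : t.encard < k := (Set.encard_le_encard ht).trans_lt hM
  rw [Set.inter_eq_left.mpr ht] at hle
  have hts : t.encard + 1 ≤ s.encard :=
    calc t.encard + 1 ≤ (s ∩ N).encard + 1 := add_le_add_left hle 1
      _ = (insert c (s ∩ N)).encard := (Set.encard_insert_of_notMem fun hc => hcN hc.2).symm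
      _ ≤ s.encard := Set.encard_le_encard (Set.insert_subset hcs Set.inter_subset_left)
  have : t.encard + 1 ≤ t.encard :=
    calc t.encard + 1 ≤ min s.encard k := le_min hts (Order.add_one_le_of_lt htk)
      _ = t.encard := h.trans (min_eq_left htk.le)
  exact this.not_gt (ENat.lt_add_one_iff htk.ne_top |>.mpr le_rfl)

end CardEqUpTo

section Geometry

noncomputable def box (r : ℕ) : Finset (ℤ × ℤ) :=
  Finset.Icc (-(r : ℤ)) r ×ˢ Finset.Icc (-(r : ℤ)) r

variable {r s : ℕ} {u v w : ℤ × ℤ}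

theorem mem_box : u ∈ box r ↔ -(r : ℤ) ≤ u.1 ∧ u.1 ≤ r ∧ -(r : ℤ) ≤ u.2 ∧ u.2 ≤ r := by
  simp only [box, Finset.mem_product, Finset.mem_Icc, and_assoc]

theorem card_box (r : ℕ) : (box r).card = (2 * r + 1) ^ 2 := by
  rw [box, Finset.card_product, Int.card_Icc, sq]
  congr 1 <;> omega

theorem zero_mem_box (r : ℕ) : (0 : ℤ × ℤ) ∈ box r := by
  simp [mem_box]

theorem box_mono (h : r ≤ s) (hu : u ∈ box r) : u ∈ box s := by
  rw [mem_box] at *; omega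

theorem neg_mem_box (hu : u ∈ box r) : -u ∈ box r := by
  rw [mem_box] at *; simp only [Prod.fst_neg, Prod.snd_neg]; omega

theorem add_mem_box (hu : u ∈ box r) (hv : v ∈ box s) : u + v ∈ box (r + s) := by
  rw [mem_box] at *; simp only [Prod.fst_add, Prod.snd_add]; push_cast; omega

def Near (r : ℕ) (v w : ℤ × ℤ) : Prop :=
  v - w ∈ box r

theorem Near.symm (h : Near r v w) : Near r w v := by
  simpa only [Near, neg_sub] using neg_mem_box h

theorem Near.trans (h : Near r u v) (h' : Near s v w) : Near (r + s) u w := by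
  simpa only [Near, sub_add_sub_cancel] using add_mem_box h h'

theorem Near.mono (hrs : r ≤ s) (h : Near r v w) : Near s v w :=
  box_mono hrs h

theorem Near.add_sub (h : Near r v w) (u : ℤ × ℤ) : Near r (v + (u - w)) u := by
  rwa [Near, show v + (u - w) - u = v - w by abel]

theorem encard_setOf_exists_near_le {m : ℕ} (r : ℕ) (p : Fin m → ℤ × ℤ) :
    {v | ∃ j, Near r v (p j)}.encard ≤ m * (2 * r + 1) ^ 2 := by
  classical
  have hcover : {v | ∃ j, Near r v (p j)} =
      ↑(Finset.univ.biUnion fun j => (box r).image (p j + ·)) := by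
    ext v
    simp only [Finset.coe_biUnion, Finset.coe_univ, Set.mem_univ,
      Set.iUnion_true, Set.mem_iUnion, Finset.coe_image, Set.mem_image, Finset.mem_coe]
    refine exists_congr fun j => ⟨fun h => ⟨v - p j, h, add_sub_cancel _ _⟩, ?_⟩
    rintro ⟨u, hu, rfl⟩
    simpa [Near] using hu
  rw [hcover, Set.encard_coe_eq_coe_finsetCard]
  norm_cast
  calc (Finset.univ.biUnion fun j => (box r).image (p j + ·)).card
      ≤ ∑ j : Fin m, ((box r).image (p j + ·)).card := Finset.card_biUnion_le
    _ ≤ ∑ _j : Fin m, (box r).card := Finset.sum_le_sum fun _ _ => Finset.card_image_le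
    _ = m * (2 * r + 1) ^ 2 := by simp [card_box]

end Geometry

section Balls

variable {A : Type} {r r' R k : ℕ}

def SameBall (r : ℕ) (x : ℤ × ℤ → A) (v : ℤ × ℤ) (y : ℤ × ℤ → A) (w : ℤ × ℤ) : Prop :=
  ∀ u ∈ box r, x (v + u) = y (w + u)

variable {x y z : ℤ × ℤ → A} {v w c : ℤ × ℤ}

theorem SameBall.symm (h : SameBall r x v y w) : SameBall r y w x v :=
  fun u hu => (h u hu).symm

theorem SameBall.trans {w' : ℤ × ℤ} (h : SameBall r x v y w) (h' : SameBall r y w z w') :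
    SameBall r x v z w' :=
  fun u hu => (h u hu).trans (h' u hu)

theorem SameBall.mono (hr : r' ≤ r) (h : SameBall r x v y w) : SameBall r' x v y w :=
  fun u hu => h u (box_mono hr hu)

theorem SameBall.shift {s : ℕ} {v' : ℤ × ℤ} (h : SameBall r x v y w) (hv : Near s v' v)
    (hr : s + r' ≤ r) : SameBall r' x v' y (v' + (w - v)) := by
  intro u hu
  have h₁ := h _ (box_mono hr (add_mem_box hv hu))
  rwa [show v + (v' - v + u) = v' + u by abel, show w + (v' - v + u) = v' + (w - v) + u by abel]
    at h₁

def window (R : ℕ) (x : ℤ × ℤ → A) (v : ℤ × ℤ) : box R → A :=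
  fun u => x (v + u)

theorem sub_mem_box_iff_mem_sqN {u : ℤ × ℤ} :
    u - ((R, R) : ℤ × ℤ) ∈ box R ↔ u ∈ sqN (2 * R + 1) := by
  simp only [mem_box, sqN, Set.mem_ofPred_eq, Prod.fst_sub, Prod.snd_sub]
  push_cast
  omega

theorem window_preimage_singleton (σ : box R → A) :
    ∃ P : ℤ × ℤ → A, ∀ x : ℤ × ℤ → A,
      window R x ⁻¹' {σ} = (Equiv.subRight ((R, R) : ℤ × ℤ)) ⁻¹' OccSet x P (2 * R + 1) := by
  classical
  refine ⟨fun u => if h : u - ((R, R) : ℤ × ℤ) ∈ box R then σ ⟨_, h⟩ else σ ⟨0, zero_mem_box R⟩,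
    fun x => Set.ext fun v => ?_⟩
  simp only [Set.mem_preimage, Set.mem_singleton_iff, OccSet, Set.mem_ofPred_eq,
    Equiv.subRight_apply, funext_iff, Subtype.forall, window]
  constructor
  · intro h u hu
    rw [dif_pos (sub_mem_box_iff_mem_sqN.mpr hu), ← h]
    congr 1
    abel
  · intro h u hu
    have := h (u + ((R, R) : ℤ × ℤ)) (sub_mem_box_iff_mem_sqN.mp (by simpa using hu))
    simp only [add_sub_cancel_right, dif_pos hu] at this
    rw [this, show u + ((R, R) : ℤ × ℤ) + (v - ((R, R) : ℤ × ℤ)) = v + u by abel]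

theorem EquivNK.cardEqUpTo_sameBall [Finite A] (hxy : EquivNK (2 * R + 1) k x y) (hr : r ≤ R)
    (z : ℤ × ℤ → A) (c : ℤ × ℤ) :
    CardEqUpTo k {v | SameBall r x v z c} {w | SameBall r y w z c} := by
  have hfib (σ : box R → A) : CardEqUpTo k (window R x ⁻¹' {σ}) (window R y ⁻¹' {σ}) := by
    obtain ⟨P, hP⟩ := window_preimage_singleton σ
    rw [hP, hP]
    exact (hxy.cardEqUpTo_occSet P).preimage_equiv _ _
  exact cardEqUpTo_preimage hfib {σ | ∀ u (hu : u ∈ box r), σ ⟨u, box_mono hr hu⟩ = z (c + u)}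

end Balls

section Matched

variable {A : Type} {r r' R k m : ℕ} {x y : ℤ × ℤ → A} {a b : Fin m → ℤ × ℤ}

/-- The invariant of the Ehrenfeucht–Fraïssé game. -/
def Matched (r : ℕ) (x y : ℤ × ℤ → A) (a b : Fin m → ℤ × ℤ) : Prop :=
  (∀ i, SameBall r x (a i) y (b i)) ∧
    ∀ i j, Near (2 * r) (a i) (a j) ∨ Near (2 * r) (b i) (b j) → a i - a j = b i - b j

theorem Matched.symm (h : Matched r x y a b) : Matched r y x b a :=
  ⟨fun i => (h.1 i).symm, fun i j hij => (h.2 i j hij.symm).symm⟩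

theorem Matched.mono (hr : r' ≤ r) (h : Matched r x y a b) : Matched r' x y a b :=
  ⟨fun i => (h.1 i).mono hr, fun i j hij =>
    h.2 i j (hij.imp (Near.mono (by omega)) (Near.mono (by omega)))⟩

theorem Matched.snoc {c d : ℤ × ℤ} (h : Matched r x y a b) (hr : r' ≤ r)
    (hcd : SameBall r' x c y d)
    (hnear : ∀ i, Near (2 * r') c (a i) ∨ Near (2 * r') d (b i) → c - a i = d - b i) :
    Matched r' x y (Fin.snoc a c) (Fin.snoc b d) := by
  have hnear' (i) (hi : Near (2 * r') (a i) c ∨ Near (2 * r') (b i) d) : a i - c = b i - d := by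
    rw [← neg_sub, hnear i (hi.imp Near.symm Near.symm), neg_sub]
  refine ⟨Fin.lastCases ?_ fun i => ?_,
    Fin.lastCases (Fin.lastCases ?_ fun j => ?_) fun i => Fin.lastCases ?_ fun j => ?_⟩ <;>
    simp only [Fin.snoc_last, Fin.snoc_castSucc]
  exacts [hcd, (h.mono hr).1 i, fun _ => by simp, hnear j, hnear' i, (h.mono hr).2 i j]

theorem Matched.exists_snoc_of_near {c : ℤ × ℤ} {j : Fin m} (h : Matched r x y a b)
    (hr : 3 * r' ≤ r) (hc : Near (2 * r') c (a j)) :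
    ∃ d, Matched r' x y (Fin.snoc a c) (Fin.snoc b d) := by
  refine ⟨c + (b j - a j), h.snoc (by omega) ((h.1 j).shift hc (by omega)) fun i hi => ?_⟩
  have hji : Near (2 * r) (a j) (a i) ∨ Near (2 * r) (b j) (b i) :=
    hi.imp (fun hi => (hc.symm.trans hi).mono (by omega))
      (fun hi => ((hc.add_sub (b j)).symm.trans hi).mono (by omega))
  linear_combination h.2 j i hji

/-- Translate each point near some `b j` by `a j - b j`: this is well defined and injective
because nearby `b j` are placed like the corresponding `a j`. -/
theorem Matched.encard_inter_near_le (h : Matched r x y a b) (hr : 3 * r' ≤ r)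
    (z : ℤ × ℤ → A) (c : ℤ × ℤ) :
    ({w | SameBall r' y w z c} ∩ {w | ∃ j, Near (2 * r') w (b j)}).encard ≤
      ({v | SameBall r' x v z c} ∩ {v | ∃ j, Near (2 * r') v (a j)}).encard := by
  classical
  let F : ℤ × ℤ → ℤ × ℤ := fun w =>
    if hw : ∃ j, Near (2 * r') w (b j) then w + (a hw.choose - b hw.choose) else w
  have hF (w) (j) (hw : Near (2 * r') w (b j)) : F w = w + (a j - b j) := by
    have hex : ∃ j, Near (2 * r') w (b j) := ⟨j, hw⟩
    have hb : Near (2 * r) (b hex.choose) (b j) :=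
      (hex.choose_spec.symm.trans hw).mono (by omega)
    simp only [F, dif_pos hex]
    linear_combination h.2 _ _ (Or.inr hb)
  refine Set.encard_le_encard_of_injOn (f := F) ?_ ?_
  · rintro w ⟨hwz, j, hw⟩
    rw [hF w j hw]
    exact ⟨((h.1 j).symm.shift hw (by omega)).symm.trans hwz, j, hw.add_sub (a j)⟩
  · rintro w ⟨-, j, hw⟩ w' ⟨-, j', hw'⟩ hww'
    rw [hF w j hw, hF w' j' hw'] at hww'
    have hwa := hw.add_sub (a j)
    rw [hww'] at hwa
    have ha : Near (2 * r) (a j) (a j') := (hwa.symm.trans (hw'.add_sub (a j'))).mono (by omega)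
    linear_combination hww' - h.2 j j' (Or.inl ha)

theorem Matched.exists_snoc_of_far [Finite A] (hxy : EquivNK (2 * R + 1) k x y)
    (h : Matched r x y a b) (hr : 3 * r' ≤ r) (hR : r' ≤ R) (hk : m * (4 * r' + 1) ^ 2 < k)
    {c : ℤ × ℤ} (hc : ∀ j, ¬ Near (2 * r') c (a j)) :
    ∃ d, Matched r' x y (Fin.snoc a c) (Fin.snoc b d) := by
  have hnear : {w | ∃ j, Near (2 * r') w (b j)}.encard < k := by
    have hk' : m * (2 * (2 * r') + 1) ^ 2 < k := by rwa [show 2 * (2 * r') + 1 = 4 * r' + 1 by ring]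
    exact (encard_setOf_exists_near_le _ b).trans_lt (mod_cast hk')
  obtain ⟨d, hd, hdfar⟩ := (hxy.cardEqUpTo_sameBall hR x c).nonempty_diff hnear
    (h.encard_inter_near_le hr x c) ⟨c, fun _ _ => rfl, fun ⟨j, hj⟩ => hc j hj⟩
  refine ⟨d, h.snoc (by omega) (SameBall.symm hd) fun i hi => ?_⟩
  exact (hi.elim (hc i) fun hi => hdfar ⟨i, hi⟩).elim

theorem Matched.exists_snoc [Finite A] (hxy : EquivNK (2 * R + 1) k x y)
    (h : Matched r x y a b) (hr : 3 * r' ≤ r) (hR : r' ≤ R) (hk : m * (4 * r' + 1) ^ 2 < k)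
    (c : ℤ × ℤ) : ∃ d, Matched r' x y (Fin.snoc a c) (Fin.snoc b d) := by
  by_cases hc : ∃ j, Near (2 * r') c (a j)
  · obtain ⟨j, hj⟩ := hc
    exact h.exists_snoc_of_near hr hj
  · exact h.exists_snoc_of_far hxy hr hR hk (not_exists.mp hc)

end Matched

namespace Dir

def vec : Dir → ℤ × ℤ
  | east => (1, 0)
  | west => (-1, 0)
  | north => (0, 1)
  | south => (0, -1)

theorem vec_mem_box (d : Dir) : d.vec ∈ box 1 := by
  cases d <;> simp [vec, mem_box]

end Dir

section Formulas

open FirstOrder.Language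

variable {A : Type}

theorem struc_funMap (x : ℤ × ℤ → A) (d : Dir) (v : Fin 1 → ℤ × ℤ) :
    @Structure.funMap (LA A) (ℤ × ℤ) (struc A x) 1 d v = v 0 + d.vec := by
  cases d <;> ext <;> simp [Dir.vec] <;> rfl

def termDepth {α : Type} : (LA A).Term α → ℕ
  | .var _ => 0
  | .func _ ts => (Finset.univ.sup fun i => termDepth (ts i)) + 1

theorem exists_realize_eq_add {α : Type} (t : (LA A).Term α) :
    ∃ i : α, ∃ o ∈ box (termDepth t), ∀ (x : ℤ × ℤ → A) (w : α → ℤ × ℤ),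
      @Term.realize (LA A) (ℤ × ℤ) (struc A x) α w t = w i + o := by
  induction t with
  | var i => exact ⟨i, 0, zero_mem_box _, fun _ _ => (add_zero _).symm⟩
  | @func l f ts ih =>
    match l, f, ts, ih with
    | 0, f, _, _ => exact (f : Empty).elim
    | l + 2, f, _, _ => exact (f : Empty).elim
    | 1, d, ts, ih =>
      obtain ⟨i, o, ho, hreal⟩ := ih 0
      have hdepth : termDepth (ts 0) + 1 ≤ termDepth (Term.func d ts) :=
        Nat.add_le_add_right (Finset.le_sup (f := fun i => termDepth (ts i)) (Finset.mem_univ 0)) 1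
      refine ⟨i, o + Dir.vec d, box_mono hdepth (add_mem_box ho (Dir.vec_mem_box d)), fun x w => ?_⟩
      refine (struc_funMap x d _).trans ?_
      rw [hreal, add_assoc]

/-- A radius at which the truth of `ψ` only depends on the balls around the assigned points. The
factor `3` makes room for the extension step: an answer within `2r'` of an old point, together
with its `r'`-ball, lies in the `r`-ball of that point. -/
def rad : ∀ {m : ℕ}, (LA A).BoundedFormula Empty m → ℕ
  | _, .falsum => 0
  | _, .equal t₁ t₂ => max (termDepth t₁) (termDepth t₂)
  | _, .rel _ ts => Finset.univ.sup fun i => termDepth (ts i)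
  | _, .imp f g => max (rad f) (rad g)
  | _, .all f => 3 * rad f + 1

def Sat (x : ℤ × ℤ → A) {m : ℕ} (ψ : (LA A).BoundedFormula Empty m) (a : Fin m → ℤ × ℤ) :
    Prop :=
  @BoundedFormula.Realize (LA A) (ℤ × ℤ) (struc A x) Empty m ψ default a

/-- The two sides realize the variables of the empty types `Empty` and `Fin 0` by maps that are
equal but not definitionally so. -/
theorem models_iff_sat (x : ℤ × ℤ → A) (φ : (LA A).Sentence) (a : Fin 0 → ℤ × ℤ) :
    Models x φ ↔ Sat x φ a := by
  unfold Models Sat Sentence.Realize Formula.Realize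
  congr!

theorem sat_all {x : ℤ × ℤ → A} {m : ℕ} {ψ : (LA A).BoundedFormula Empty (m + 1)}
    {a : Fin m → ℤ × ℤ} : Sat x ψ.all a ↔ ∀ c, Sat x ψ (Fin.snoc a c) :=
  letI := struc A x
  BoundedFormula.realize_all

theorem Matched.sat_equal_iff {m : ℕ} {x y : ℤ × ℤ → A} {a b : Fin m → ℤ × ℤ}
    {t₁ t₂ : (LA A).Term (Empty ⊕ Fin m)} (h : Matched (rad (.equal t₁ t₂)) x y a b) :
    Sat x (.equal t₁ t₂) a ↔ Sat y (.equal t₁ t₂) b := by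
  obtain ⟨⟨⟨⟩⟩ | i₁, o₁, ho₁, hreal₁⟩ := exists_realize_eq_add t₁
  obtain ⟨⟨⟨⟩⟩ | i₂, o₂, ho₂, hreal₂⟩ := exists_realize_eq_add t₂
  have hnear (p q : ℤ × ℤ) (hpq : p + o₁ = q + o₂) : Near (2 * rad (.equal t₁ t₂)) p q := by
    have : p - q = o₂ + -o₁ := by linear_combination hpq
    rw [Near, this]
    exact box_mono (by simp only [rad]; omega) (add_mem_box ho₂ (neg_mem_box ho₁))
  change _ = _ ↔ _ = _
  simp only [hreal₁, hreal₂, Sum.elim_inr]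
  constructor
  · intro e
    linear_combination e - h.2 i₁ i₂ (Or.inl (hnear _ _ e))
  · intro e
    linear_combination e + h.2 i₁ i₂ (Or.inr (hnear _ _ e))

theorem Matched.sat_rel_iff {m l : ℕ} {x y : ℤ × ℤ → A} {a b : Fin m → ℤ × ℤ}
    {c : (LA A).Relations l} {ts : Fin l → (LA A).Term (Empty ⊕ Fin m)}
    (h : Matched (rad (.rel c ts)) x y a b) : Sat x (.rel c ts) a ↔ Sat y (.rel c ts) b := by
  match l, c, ts, h with
  | 0, c, _, _ => exact (c : Empty).elim
  | l + 2, c, _, _ => exact (c : Empty).elim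
  | 1, c, ts, h =>
    obtain ⟨⟨⟨⟩⟩ | i, o, ho, hreal⟩ := exists_realize_eq_add (ts 0)
    have hdepth : termDepth (ts 0) ≤ rad (BoundedFormula.rel c ts) :=
      Finset.le_sup (f := fun i => termDepth (ts i)) (Finset.mem_univ 0)
    change x (@Term.realize _ _ (struc A x) _ _ (ts 0)) = _ ↔
      y (@Term.realize _ _ (struc A y) _ _ (ts 0)) = _
    rw [hreal, hreal, Sum.elim_inr, Sum.elim_inr, h.1 i o (box_mono hdepth ho)]

theorem sat_iff_of_matched [Finite A] {R k : ℕ} {x y : ℤ × ℤ → A}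
    (hxy : EquivNK (2 * R + 1) k x y) (hk : R * (4 * R + 1) ^ 2 < k) {m : ℕ}
    (ψ : (LA A).BoundedFormula Empty m) (hψ : m + rad ψ ≤ R) {a b : Fin m → ℤ × ℤ}
    (h : Matched (rad ψ) x y a b) : Sat x ψ a ↔ Sat y ψ b := by
  induction ψ with
  | falsum => rfl
  | equal t₁ t₂ => exact h.sat_equal_iff
  | rel c ts => exact h.sat_rel_iff
  | imp f g ihf ihg =>
    simp only [rad] at hψ
    exact imp_congr (ihf (by omega) (h.mono (le_max_left _ _)))
      (ihg (by omega) (h.mono (le_max_right _ _)))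
  | @all m f ih =>
    simp only [rad] at hψ h
    have hk' : m * (4 * rad f + 1) ^ 2 < k :=
      lt_of_le_of_lt (Nat.mul_le_mul (by omega) (Nat.pow_le_pow_left (by omega) 2)) hk
    rw [sat_all, sat_all]
    constructor
    · intro hx d
      obtain ⟨c, hc⟩ := h.symm.exists_snoc hxy.symm (by omega) (by omega) hk' d
      exact (ih (by omega) hc.symm).mp (hx c)
    · intro hy c
      obtain ⟨d, hd⟩ := h.exists_snoc hxy (by omega) (by omega) hk' c
      exact (ih (by omega) hd).mpr (hy d)

end Formulas

theorem exists_nk_union_of_classes_general {A : Type} [Fintype A]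
    (φ : (LA A).Sentence) :
    ∃ n k : ℕ, 1 ≤ n ∧ 1 ≤ k ∧
      ∀ x y : ℤ × ℤ → A, EquivNK n k x y → (Models x φ ↔ Models y φ) := by
  refine ⟨2 * rad φ + 1, rad φ * (4 * rad φ + 1) ^ 2 + 1, by omega, by omega, fun x y hxy => ?_⟩
  rw [models_iff_sat x φ finZeroElim, models_iff_sat y φ finZeroElim]
  exact sat_iff_of_matched hxy (Nat.lt_succ_self _) φ (by simp) ⟨finZeroElim, finZeroElim⟩

/-- For every `L_A`-sentence `φ` there are `n, k ≥ 1` such that `X_φ` is a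
union of `∼_(n,k)`-equivalence classes. -/
theorem exists_nk_union_of_classes {A : Type} [Fintype A] [Nonempty A]
    (φ : (LA A).Sentence) :
    ∃ n k : ℕ, 1 ≤ n ∧ 1 ≤ k ∧
      ∀ x y : ℤ × ℤ → A, EquivNK n k x y → (Models x φ ↔ Models y φ) :=
  exists_nk_union_of_classes_general φ
end

section
/- For every finite set F of patterns over a nonempty finite alphabet A, there exists an L_A-sentence φ of the form ∀v ψ(v), where ψ is quantifier-free (with terms built by applying East, West, North, South to the single variable v), such that X_φ = X_F; that is, every subshift of finite type is definable by a first-order sentence with a single universal quantifier. -/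
open FirstOrder

/-- A pattern over the alphabet `A`: a finite domain `D ⊆ ℤ × ℤ` together with
an assignment of colours (only the values on `dom` are relevant). -/
structure Pattern (A : Type*) where
  dom : Finset (ℤ × ℤ)
  val : ℤ × ℤ → A

/-- A pattern `P` appears in the configuration `x` if some translate of `x`
agrees with `P` on its domain. -/
def Appears {A : Type*} (P : Pattern A) (x : ℤ × ℤ → A) : Prop :=
  ∃ v : ℤ × ℤ, ∀ u ∈ P.dom, P.val u = x (u + v)

/-- The set `X_F` of configurations avoiding every pattern of `F`. -/
def XofF {A : Type*} (F : Set (Pattern A)) : Set (ℤ × ℤ → A) :=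
  {x | ∀ P ∈ F, ¬ Appears P x}

/-! A pattern `P` appears at `v` iff `P_{P(u)}(v + u)` holds for every `u ∈ dom P`, and each point
`v + u` is named by a term that walks from `v` by unit moves East, West, North, South. So `ψ(v)` is
the conjunction, over `P ∈ F`, of the negated conjunctions for `P`; finiteness of `F` and of the
domains keeps it a formula. -/

open Language BoundedFormula

theorem FirstOrder.Language.BoundedFormula.IsQF.iInf {L : Language} {α β : Type*} {n : ℕ}
    [Finite β] {f : β → L.BoundedFormula α n} (h : ∀ b, (f b).IsQF) :
    (BoundedFormula.iInf f).IsQF := by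
  let _ := Fintype.ofFinite β
  suffices ∀ l : List (L.BoundedFormula α n), (∀ φ ∈ l, φ.IsQF) → (l.foldr (· ⊓ ·) ⊤).IsQF from
    this _ (by simp [h])
  intro l hl
  induction l with
  | nil => exact IsQF.top
  | cons φ l ih => exact (hl φ (by simp)).inf (ih fun ψ hψ => hl ψ (by simp [hψ]))

def Dir.vec_s14 : Dir → ℤ × ℤ
  | .east => (1, 0)
  | .west => (-1, 0)
  | .north => (0, 1)
  | .south => (0, -1)

variable {A : Type} {α : Type*}

def moveTerm (d : Dir) (t : (LA A).Term α) : (LA A).Term α :=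
  Term.func (l := 1) (d : (LA A).Functions 1) ![t]

/-- Only one of the counts `n.toNat`, `(-n).toNat` is nonzero, so this walks `|u.1|` steps east or
west and `|u.2|` steps north or south. -/
def offsetTerm (u : ℤ × ℤ) : (LA A).Term α → (LA A).Term α :=
  (moveTerm .east)^[u.1.toNat] ∘ (moveTerm .west)^[(-u.1).toNat] ∘
    (moveTerm .north)^[u.2.toNat] ∘ (moveTerm .south)^[(-u.2).toNat]

def colourAt (c : A) (u : ℤ × ℤ) : (LA A).BoundedFormula α 1 :=
  Relations.boundedFormula₁ (c : (LA A).Relations 1) (offsetTerm u &0)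

noncomputable def patternFormula (P : Pattern A) : (LA A).BoundedFormula α 1 :=
  BoundedFormula.iInf fun u : P.dom => colourAt (P.val u) u

theorem isQF_patternFormula (P : Pattern A) : (patternFormula (α := α) P).IsQF :=
  IsQF.iInf fun _ => (IsAtomic.rel _ _).isQF

section Realize

variable (x : ℤ × ℤ → A) (v : α → ℤ × ℤ)

theorem realize_moveTerm (d : Dir) (t : (LA A).Term α) :
    @Term.realize (LA A) _ (struc A x) _ v (moveTerm d t) =
      @Term.realize (LA A) _ (struc A x) _ v t + d.vec_s14 := by
  cases d <;> ext <;> simp [moveTerm, Dir.vec_s14] <;> rfl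

theorem realize_iterate_moveTerm (d : Dir) (k : ℕ) (t : (LA A).Term α) :
    @Term.realize (LA A) _ (struc A x) _ v ((moveTerm d)^[k] t) =
      @Term.realize (LA A) _ (struc A x) _ v t + k • d.vec_s14 := by
  induction k with
  | zero => simp
  | succ k ih => rw [Function.iterate_succ_apply', realize_moveTerm, ih, succ_nsmul, add_assoc]

theorem realize_offsetTerm (u : ℤ × ℤ) (t : (LA A).Term α) :
    @Term.realize (LA A) _ (struc A x) _ v (offsetTerm u t) =
      u + @Term.realize (LA A) _ (struc A x) _ v t := by
  simp only [offsetTerm, Function.comp_apply, realize_iterate_moveTerm]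
  ext <;> simp [Dir.vec_s14] <;> omega

variable (xs : Fin 1 → ℤ × ℤ)

theorem realize_colourAt (c : A) (u : ℤ × ℤ) :
    @BoundedFormula.Realize (LA A) _ (struc A x) _ _ (colourAt c u) v xs ↔ x (u + xs 0) = c := by
  let _ := struc A x
  exact realize_rel₁.trans (Iff.of_eq (congrArg (x · = c) (realize_offsetTerm x _ u &0)))

theorem realize_patternFormula (P : Pattern A) :
    @BoundedFormula.Realize (LA A) _ (struc A x) _ _ (patternFormula P) v xs ↔
      ∀ u ∈ P.dom, P.val u = x (u + xs 0) := by
  simp only [patternFormula, realize_iInf, realize_colourAt, Subtype.forall, eq_comm]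

end Realize

theorem SFT_definable_by_universal_sentence_general
    {A : Type}
    (F : Set (Pattern A)) (hF : F.Finite) :
    ∃ ψ : (LA A).BoundedFormula Empty 1, ψ.IsQF ∧
      ∀ x : ℤ × ℤ → A, Models x ψ.all ↔ x ∈ XofF F := by
  have := hF.to_subtype
  refine ⟨BoundedFormula.iInf fun P : F => (patternFormula P.1).not,
    IsQF.iInf fun _ => (isQF_patternFormula _).not, fun x => ?_⟩
  simp only [Models, Sentence.Realize, Formula.Realize, realize_all, realize_iInf, realize_not,
    realize_patternFormula, XofF, Appears, Set.mem_ofPred_eq, Subtype.forall, not_exists]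
  exact ⟨fun h P hP a => h a P hP, fun h a P hP => h P hP a⟩

/-- Every subshift of finite type `X_F` (with `F` finite) is definable by an
`L_A`-sentence of the form `∀v ψ(v)` with `ψ` quantifier-free. -/
theorem SFT_definable_by_universal_sentence
    {A : Type} [Fintype A] [Nonempty A]
    (F : Set (Pattern A)) (hF : F.Finite) :
    ∃ ψ : (LA A).BoundedFormula Empty 1, ψ.IsQF ∧
      ∀ x : ℤ × ℤ → A, Models x ψ.all ↔ x ∈ XofF F :=
  SFT_definable_by_universal_sentence_general F hF
end
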